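/- If G is a graph with an SOCDC and G' is the graph obtained from G by subdividing one edge of G (replacing an edge uv by a new vertex w and the two edges uw, wv), then G' also has an SOCDC. -/

import Mathlib

open SimpleGraph

/-- The list of arcs of a cyclically-read list of vertices:
`[(l₀,l₁), (l₁,l₂), …, (lₙ₋₁,l₀)]`. -/
def cycleArcs {V : Type*} (l : List V) : List (V × V) := l.zip (l.rotate 1)

/-- `l` represents a directed cycle of the symmetric orientation of `G`:
a cyclic sequence of at least three pairwise distinct vertices with consecutive
vertices adjacent (cyclically). -/
def IsDirCycle {V : Type*} (G : SimpleGraph V) (l : List V) : Prop :=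
  3 ≤ l.length ∧ l.Nodup ∧ ∀ p ∈ cycleArcs l, G.Adj p.1 p.2

/-- An oriented cycle double cover of `G` : a collection of directed cycles of the
symmetric orientation of `G` such that each arc `(u,v)` (with `u ~ v` in `G`) lies
in exactly one of the cycles. -/
def IsOCDC {V : Type*} (G : SimpleGraph V) (C : Finset (List V)) : Prop :=
  (∀ l ∈ C, IsDirCycle G l) ∧
    ∀ u v : V, G.Adj u v → ∃! l : List V, l ∈ C ∧ (u, v) ∈ cycleArcs l

/-- `G` (a graph with vertex set of size `n`) has a small oriented cycle double cover:
an OCDC with at most `n - 1` directed cycles. -/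
def HasSOCDC {V : Type*} (G : SimpleGraph V) : Prop :=
  ∃ C : Finset (List V), IsOCDC G C ∧ C.card ≤ Nat.card V - 1

/-- `l` represents a directed path of the symmetric orientation of `G`. -/
def IsDirPath {V : Type*} (G : SimpleGraph V) (l : List V) : Prop :=
  l ≠ [] ∧ l.Nodup ∧ l.Chain' G.Adj

/-- An oriented perfect path double cover of `G`: a collection of directed paths of the
symmetric orientation of `G` such that each arc lies in exactly one path, and every
vertex occurs exactly once as the start and exactly once as the end of a path. -/
def IsOPPDC {V : Type*} (G : SimpleGraph V) (P : Finset (List V)) : Prop :=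
  (∀ l ∈ P, IsDirPath G l) ∧
    (∀ u v : V, G.Adj u v → ∃! l : List V, l ∈ P ∧ (u, v) ∈ l.zip l.tail) ∧
    (∀ v : V, ∃! l : List V, l ∈ P ∧ l.head? = some v) ∧
    (∀ v : V, ∃! l : List V, l ∈ P ∧ l.getLast? = some v)

/-! Every directed cycle of an SOCDC of `G` that traverses the arc `(u, v)` or `(v, u)` is
rerouted through the new vertex `w = Sum.inr ()`, and every other cycle is kept. A cycle of
length at least three cannot use both `(u, v)` and `(v, u)`, so each arc of the subdivision lies
on exactly one rerouted cycle, namely the one through its "parent" arc of `G`. The number of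
cycles does not grow, while the number of vertices grows by one. -/

section CycleArcs

variable {V W : Type*}

lemma cycleArcs_rotate (l : List V) (k : ℕ) :
    cycleArcs (l.rotate k) = (cycleArcs l).rotate k := by
  rw [cycleArcs, List.rotate_rotate, Nat.add_comm, ← List.rotate_rotate]
  exact (List.zipWith_rotate_distrib _ _ _ _ (by simp)).symm

lemma mem_cycleArcs_rotate {l : List V} {k : ℕ} {p : V × V} :
    p ∈ cycleArcs (l.rotate k) ↔ p ∈ cycleArcs l := by
  rw [cycleArcs_rotate, List.mem_rotate]

lemma cycleArcs_map (f : V → W) (l : List V) :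
    cycleArcs (l.map f) = (cycleArcs l).map (Prod.map f f) := by
  rw [cycleArcs, ← List.map_rotate, List.zip_map, cycleArcs]

lemma cycleArcs_cons_cons (a b : V) (t : List V) :
    cycleArcs (a :: b :: t) = (a, b) :: (b :: t).zip (t ++ [a]) :=
  List.zipWith_rotate_one _ _ _ _

lemma nodup_cycleArcs {l : List V} (hl : l.Nodup) : (cycleArcs l).Nodup :=
  List.Nodup.of_map Prod.fst (by rwa [cycleArcs, List.map_fst_zip (by simp)])

lemma cycleArcs_inl_inr_map_inl (a b : V) (t : List V) :
    cycleArcs ((Sum.inl a : V ⊕ Unit) :: Sum.inr () :: (b :: t).map Sum.inl) =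
      (Sum.inl a, Sum.inr ()) :: (Sum.inr (), Sum.inl b) ::
        ((b :: t).zip (t ++ [a])).map (Prod.map Sum.inl Sum.inl) := by
  rw [List.map_cons, cycleArcs_cons_cons, List.cons_append, List.zip_cons_cons, ← List.map_cons,
    ← List.map_singleton, ← List.map_append, List.zip_map]

variable [DecidableEq V]

lemma rotate_idxOf_eq_cons_of_mem {l : List V} {a : V} (ha : a ∈ l) :
    ∃ s, l.rotate (l.idxOf a) = a :: s := by
  have hhead : (l.rotate (l.idxOf a)).head? = some a := by
    rw [List.head?_rotate (List.idxOf_lt_length_iff.2 ha), List.getElem?_idxOf ha]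
  match hr : l.rotate (l.idxOf a) with
  | x :: s => rw [hr] at hhead; exact ⟨s, by simpa using hhead⟩
  | [] => simp [hr] at hhead

lemma rotate_idxOf_eq_cons {l : List V} (hl : l.Nodup) (h2 : 2 ≤ l.length)
    {a b : V} (hab : (a, b) ∈ cycleArcs l) :
    ∃ t, l.rotate (l.idxOf a) = a :: b :: t := by
  obtain ⟨s, hs⟩ := rotate_idxOf_eq_cons_of_mem (List.of_mem_zip hab).1
  have hnodup : (a :: s).Nodup := hs ▸ List.nodup_rotate.2 hl
  have harc : (a, b) ∈ cycleArcs (a :: s) := hs ▸ mem_cycleArcs_rotate.2 hab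
  match s, congrArg List.length hs with
  | y :: t, _ =>
    rw [cycleArcs_cons_cons, List.mem_cons] at harc
    rcases harc with h | h
    · exact ⟨t, by rw [hs, (Prod.mk.inj h).2]⟩
    · exact absurd (List.of_mem_zip h).1 (List.nodup_cons.1 hnodup).1
  | [], h => simp at h; omega

lemma eq_of_mem_cycleArcs_of_mem_cycleArcs {l : List V} (hl : l.Nodup) (h2 : 2 ≤ l.length)
    {a b c : V} (hab : (a, b) ∈ cycleArcs l) (hac : (a, c) ∈ cycleArcs l) :
    b = c := by
  obtain ⟨t, ht⟩ := rotate_idxOf_eq_cons hl h2 hab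
  obtain ⟨t', ht'⟩ := rotate_idxOf_eq_cons hl h2 hac
  rw [ht] at ht'
  exact (List.cons.inj (List.cons.inj ht').2).1

lemma swap_not_mem_cycleArcs {l : List V} (hl : l.Nodup) (h3 : 3 ≤ l.length)
    {a b : V} (hab : (a, b) ∈ cycleArcs l) : (b, a) ∉ cycleArcs l := by
  intro hba
  obtain ⟨t, ht⟩ := rotate_idxOf_eq_cons hl (by omega) hab
  obtain ⟨c, t, rfl⟩ : ∃ c t', t = c :: t' :=
    List.exists_cons_of_length_pos (by have := congrArg List.length ht; simp at this; omega)
  have hbc : (b, c) ∈ cycleArcs l := by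
    rw [← mem_cycleArcs_rotate (k := l.idxOf a), ht, cycleArcs_cons_cons]
    simp
  obtain rfl := eq_of_mem_cycleArcs_of_mem_cycleArcs hl (by omega) hba hbc
  have hnodup : (a :: b :: a :: t).Nodup := ht ▸ List.nodup_rotate.2 hl
  simp at hnodup

def subdivideArcFrom (a : V) (l : List V) : List (V ⊕ Unit) :=
  Sum.inl a :: Sum.inr () :: (l.rotate (l.idxOf a)).tail.map Sum.inl

lemma mem_cycleArcs_subdivideArcFrom {l : List V} (hl : l.Nodup) (h3 : 3 ≤ l.length) {a b : V}
    (hab : (a, b) ∈ cycleArcs l) {p : (V ⊕ Unit) × (V ⊕ Unit)} :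
    p ∈ cycleArcs (subdivideArcFrom a l) ↔
      p = (Sum.inl a, Sum.inr ()) ∨ p = (Sum.inr (), Sum.inl b) ∨
        ∃ c d, p = (Sum.inl c, Sum.inl d) ∧ (c, d) ∈ cycleArcs l ∧ s(c, d) ≠ s(a, b) := by
  obtain ⟨t, ht⟩ := rotate_idxOf_eq_cons hl (by omega) hab
  have harcs : ∀ q, q ∈ cycleArcs l ↔ q = (a, b) ∨ q ∈ (b :: t).zip (t ++ [a]) := by
    intro q
    rw [← mem_cycleArcs_rotate (k := l.idxOf a), ht, cycleArcs_cons_cons, List.mem_cons]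
  have hnodup := nodup_cycleArcs (ht ▸ List.nodup_rotate.2 hl : (a :: b :: t).Nodup)
  rw [cycleArcs_cons_cons, List.nodup_cons] at hnodup
  rw [subdivideArcFrom, ht, List.tail_cons, cycleArcs_inl_inr_map_inl, List.mem_cons,
    List.mem_cons, List.mem_map]
  have hzip : ∀ c d,
      (c, d) ∈ (b :: t).zip (t ++ [a]) ↔ (c, d) ∈ cycleArcs l ∧ s(c, d) ≠ s(a, b) := by
    intro c d
    rw [harcs, Ne, Sym2.eq_iff]
    constructor
    · intro h
      refine ⟨Or.inr h, ?_⟩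
      rintro (⟨rfl, rfl⟩ | ⟨rfl, rfl⟩)
      · exact hnodup.1 h
      · exact swap_not_mem_cycleArcs hl h3 hab ((harcs _).2 (Or.inr h))
    · rintro ⟨h | h, hne⟩
      · exact absurd (Or.inl (Prod.mk.inj h)) hne
      · exact h
  refine or_congr_right (or_congr_right ?_)
  simp only [Prod.exists, Prod.map, hzip]
  exact ⟨fun ⟨c, d, h, hp⟩ => ⟨c, d, hp.symm, h⟩,
    fun ⟨c, d, hp, h⟩ => ⟨c, d, h, hp.symm⟩⟩

lemma nodup_subdivideArcFrom {l : List V} (hl : l.Nodup) {a : V} (ha : a ∈ l) :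
    (subdivideArcFrom a l).Nodup := by
  obtain ⟨s, hs⟩ := rotate_idxOf_eq_cons_of_mem ha
  have hnodup : (a :: s).Nodup := hs ▸ List.nodup_rotate.2 hl
  rw [List.nodup_cons] at hnodup
  simpa [subdivideArcFrom, hs, hnodup.1] using hnodup.2.map Sum.inl_injective

lemma length_subdivideArcFrom {l : List V} (hl : l ≠ []) (a : V) :
    (subdivideArcFrom a l).length = l.length + 1 := by
  have := List.length_pos_iff.2 hl
  simp only [subdivideArcFrom, List.length_cons, List.length_map, List.length_tail,
    List.length_rotate]
  omega

end CycleArcs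

section Subdivision

variable {V : Type*} [DecidableEq V]

def subdivideCycle (u v : V) (l : List V) : List (V ⊕ Unit) :=
  if (u, v) ∈ cycleArcs l then subdivideArcFrom u l
  else if (v, u) ∈ cycleArcs l then subdivideArcFrom v l
  else l.map Sum.inl

lemma mem_cycleArcs_subdivideCycle {l : List V} (hl : l.Nodup) (h3 : 3 ≤ l.length) {u v : V}
    {p : (V ⊕ Unit) × (V ⊕ Unit)} :
    p ∈ cycleArcs (subdivideCycle u v l) ↔
      ((u, v) ∈ cycleArcs l ∧ (p = (Sum.inl u, Sum.inr ()) ∨ p = (Sum.inr (), Sum.inl v))) ∨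
      ((v, u) ∈ cycleArcs l ∧ (p = (Sum.inl v, Sum.inr ()) ∨ p = (Sum.inr (), Sum.inl u))) ∨
      ∃ c d, p = (Sum.inl c, Sum.inl d) ∧ (c, d) ∈ cycleArcs l ∧ s(c, d) ≠ s(u, v) := by
  unfold subdivideCycle
  split_ifs with huv hvu
  · have hvu := swap_not_mem_cycleArcs hl h3 huv
    rw [mem_cycleArcs_subdivideArcFrom hl h3 huv]
    simp only [huv, hvu, true_and, false_and, false_or, or_assoc]
  · rw [mem_cycleArcs_subdivideArcFrom hl h3 hvu, Sym2.eq_swap (a := v)]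
    simp only [huv, hvu, true_and, false_and, false_or, or_assoc]
  · rw [cycleArcs_map, List.mem_map]
    simp only [huv, hvu, false_and, false_or, Prod.exists, Prod.map]
    constructor
    · rintro ⟨c, d, hcd, rfl⟩
      refine ⟨c, d, rfl, hcd, ?_⟩
      rw [Ne, Sym2.eq_iff]
      rintro (⟨rfl, rfl⟩ | ⟨rfl, rfl⟩) <;> contradiction
    · rintro ⟨c, d, rfl, hcd, -⟩
      exact ⟨c, d, hcd, rfl⟩

lemma length_subdivideCycle (u v : V) {l : List V} (hl : l ≠ []) :
    l.length ≤ (subdivideCycle u v l).length := by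
  unfold subdivideCycle
  split_ifs <;> simp [length_subdivideArcFrom hl]

lemma nodup_subdivideCycle (u v : V) {l : List V} (hl : l.Nodup) :
    (subdivideCycle u v l).Nodup := by
  unfold subdivideCycle
  split_ifs with huv hvu
  · exact nodup_subdivideArcFrom hl (List.of_mem_zip huv).1
  · exact nodup_subdivideArcFrom hl (List.of_mem_zip hvu).1
  · exact hl.map Sum.inl_injective

def SimpleGraph.subdivision (G : SimpleGraph V) (u v : V) : SimpleGraph (V ⊕ Unit) where
  Adj
    | .inl a, .inl b => G.Adj a b ∧ s(a, b) ≠ s(u, v)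
    | .inl a, .inr () => a = u ∨ a = v
    | .inr (), .inl b => b = u ∨ b = v
    | .inr (), .inr () => False
  symm := ⟨by
    rintro (a | ⟨⟩) (b | ⟨⟩) h
    · exact ⟨h.1.symm, by rw [Sym2.eq_swap]; exact h.2⟩
    all_goals exact h⟩
  loopless := ⟨by rintro (a | ⟨⟩) h; exacts [h.1.ne rfl, h]⟩

lemma IsDirCycle.subdivideCycle {G : SimpleGraph V} {l : List V} (hl : IsDirCycle G l)
    (u v : V) :
    IsDirCycle (G.subdivision u v) (subdivideCycle u v l) := by
  obtain ⟨h3, hnodup, hadj⟩ := hl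
  refine ⟨h3.trans (length_subdivideCycle u v (List.ne_nil_of_length_pos (by omega))),
    nodup_subdivideCycle u v hnodup, fun p hp => ?_⟩
  rw [mem_cycleArcs_subdivideCycle hnodup h3] at hp
  rcases hp with ⟨-, rfl | rfl⟩ | ⟨-, rfl | rfl⟩ | ⟨c, d, rfl, hcd, hne⟩
  · exact Or.inl rfl
  · exact Or.inr rfl
  · exact Or.inr rfl
  · exact Or.inl rfl
  · exact ⟨hadj _ hcd, hne⟩

lemma exists_adj_cycleArcs_subdivideCycle_iff {G : SimpleGraph V} {u v : V} (huv : G.Adj u v)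
    {x y : V ⊕ Unit} (hxy : (G.subdivision u v).Adj x y) :
    ∃ a b, G.Adj a b ∧ ∀ l : List V, l.Nodup → 3 ≤ l.length →
      ((x, y) ∈ cycleArcs (subdivideCycle u v l) ↔ (a, b) ∈ cycleArcs l) := by
  have hne := huv.ne
  rcases x with c | ⟨⟩ <;> rcases y with d | ⟨⟩
  · obtain ⟨hcd, hcd_ne⟩ : G.Adj c d ∧ s(c, d) ≠ s(u, v) := hxy
    exact ⟨c, d, hcd, fun l hl h3 => by
      simpa [mem_cycleArcs_subdivideCycle hl h3] using fun _ : (c, d) ∈ cycleArcs l => hcd_ne⟩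
  · rcases hxy with rfl | rfl
    · exact ⟨c, v, huv, fun l hl h3 => by simp [mem_cycleArcs_subdivideCycle hl h3, hne]⟩
    · exact ⟨c, u, huv.symm, fun l hl h3 => by
        simp [mem_cycleArcs_subdivideCycle hl h3, hne.symm]⟩
  · rcases hxy with rfl | rfl
    · exact ⟨v, d, huv.symm, fun l hl h3 => by simp [mem_cycleArcs_subdivideCycle hl h3, hne]⟩
    · exact ⟨u, d, huv, fun l hl h3 => by simp [mem_cycleArcs_subdivideCycle hl h3, hne.symm]⟩
  · exact hxy.elim

end Subdivision

lemma IsOCDC.image {V W : Type*} [DecidableEq (List W)] {G : SimpleGraph V}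
    {G' : SimpleGraph W} {C : Finset (List V)} (hC : IsOCDC G C) {f : List V → List W}
    (hf : ∀ l ∈ C, IsDirCycle G' (f l))
    (harc : ∀ x y, G'.Adj x y → ∃ a b, G.Adj a b ∧
      ∀ l ∈ C, ((x, y) ∈ cycleArcs (f l) ↔ (a, b) ∈ cycleArcs l)) :
    IsOCDC G' (C.image f) := by
  refine ⟨by simpa using hf, fun x y hxy => ?_⟩
  obtain ⟨a, b, hab, hiff⟩ := harc x y hxy
  obtain ⟨l, ⟨hl, hlab⟩, huniq⟩ := hC.2 a b hab
  refine ⟨f l, ⟨Finset.mem_image_of_mem f hl, (hiff l hl).2 hlab⟩, ?_⟩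
  rintro _ ⟨hm, hxym⟩
  obtain ⟨l', hl', rfl⟩ := Finset.mem_image.1 hm
  exact congrArg f (huniq l' ⟨hl', (hiff l' hl').1 hxym⟩)

/-- If `G` has an SOCDC and `G'` is obtained from `G` by subdividing the edge `uv`
(replacing it by a new vertex `w` joined to `u` and `v`), then `G'` has an SOCDC. -/
theorem hasSOCDC_of_subdivision {V : Type} [Finite V] (G : SimpleGraph V) (u v : V)
    (huv : G.Adj u v) (hG : HasSOCDC G)
    (G' : SimpleGraph (V ⊕ Unit))
    (hadj : ∀ x y : V ⊕ Unit, G'.Adj x y ↔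
      ((∃ a b : V, x = Sum.inl a ∧ y = Sum.inl b ∧ G.Adj a b ∧
          ¬(a = u ∧ b = v) ∧ ¬(a = v ∧ b = u)) ∨
        (∃ a : V, (x = Sum.inl a ∧ y = Sum.inr () ∨ x = Sum.inr () ∧ y = Sum.inl a) ∧
          (a = u ∨ a = v)))) :
    HasSOCDC G' := by
  classical
  obtain rfl : G' = G.subdivision u v := by
    ext x y
    rw [hadj]
    rcases x with a | ⟨⟩ <;> rcases y with b | ⟨⟩ <;>
      simp [SimpleGraph.subdivision]
  obtain ⟨C, hC, hcard⟩ := hG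
  refine ⟨C.image (subdivideCycle u v),
    hC.image (fun l hl => (hC.1 l hl).subdivideCycle u v) fun x y hxy => ?_, ?_⟩
  · obtain ⟨a, b, hab, hiff⟩ := exists_adj_cycleArcs_subdivideCycle_iff huv hxy
    exact ⟨a, b, hab, fun l hl => hiff l (hC.1 l hl).2.1 (hC.1 l hl).1⟩
  · calc (C.image (subdivideCycle u v)).card ≤ C.card := Finset.card_image_le
      _ ≤ Nat.card V - 1 := hcard
      _ ≤ Nat.card (V ⊕ Unit) - 1 := by rw [Nat.card_sum]; omega
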